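/- arXiv:1901.05783 — 2 statements merged into one kernel-verified Lean document; each statement's English description precedes it below -/
import Mathlib

section
/- Let E and F be real Banach spaces and let T : E → F be a bounded linear operator whose adjoint T* : F* → E* (defined by T*(ℓ) = ℓ ∘ T) is injective, i.e. N(T*) = {0}. Assume that there exist a bounded linear operator S̃ : F → E and a compact linear operator K : F → F such that T ∘ S̃ = I + K, where I denotes the identity of F. Then T admits a bounded linear right inverse: there exists a bounded linear operator S : F → E such that T ∘ S = I. -/
/-!
Write `A := 1 + K`. Its kernel is finite-dimensional because `K = -1` on it, and by compactness
`A` is bounded below on a closed complement `M` of the kernel; hence the range `R` of `A` is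
closed and `A : M → R` is an isomorphism. The quotient map `q : F → F ⧸ R` equals `-(q ∘ K)`,
so it is compact and `F ⧸ R` is finite-dimensional. Since `T ∘ S' = A`, the map `S' ∘ (A|_M)⁻¹`
is a bounded right inverse of `T` on `R`. A functional on `F ⧸ R` vanishing on the range of
`q ∘ T` pulls back to one vanishing on the range of `T`, so `q ∘ T` is onto and has a linear
right inverse `σ`. Then `S y = σ (q y) + S' (A|_M)⁻¹ (y - T σ (q y))`.
-/

open Filter Topology

namespace ContinuousLinearMap

section Ring

variable {R E F : Type*} [Ring R]
  [TopologicalSpace E] [AddCommGroup E] [Module R E] [IsTopologicalAddGroup E]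
  [TopologicalSpace F] [AddCommGroup F] [Module R F] [IsTopologicalAddGroup F]

theorem HasRightInverse.of_mkQL_comp {T : E →L[R] F} {p : Submodule R F}
    (hq : (p.mkQL ∘L T).HasRightInverse) {G : p →L[R] E} (hG : T ∘L G = p.subtypeL) :
    T.HasRightInverse := by
  obtain ⟨σ, hσ⟩ := hq
  set P : F →L[R] F := T ∘L σ ∘L p.mkQL
  have hP (y : F) : (1 - P) y ∈ p := by
    rw [← Submodule.Quotient.mk_eq_zero, ← Submodule.mkQ_apply, sub_apply, map_sub]
    exact sub_eq_zero.mpr (hσ (p.mkQ y)).symm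
  refine ⟨σ ∘L p.mkQL + G ∘L (1 - P).codRestrict p hP, fun y => ?_⟩
  have hTG : T (G ((1 - P).codRestrict p hP y)) = y - P y := DFunLike.congr_fun hG _
  simp only [add_apply, comp_apply, map_add, hTG]
  exact add_sub_cancel _ _

end Ring

variable {𝕜 E F : Type*} [NontriviallyNormedField 𝕜]
  [NormedAddCommGroup E] [NormedSpace 𝕜 E] [NormedAddCommGroup F] [NormedSpace 𝕜 F]

theorem surjective_mkQL_comp_of_forall_comp_eq_zero [CompleteSpace 𝕜] {T : E →L[𝕜] F}
    (hT : ∀ ℓ : F →L[𝕜] 𝕜, ℓ ∘L T = 0 → ℓ = 0) (R : Submodule 𝕜 F) [IsClosed (R : Set F)]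
    [FiniteDimensional 𝕜 (F ⧸ R)] :
    Function.Surjective (R.mkQL ∘L T) := by
  refine LinearMap.range_eq_top.mp (by_contra fun hne => ?_)
  obtain ⟨φ, hφ, hle⟩ :=
    (R.mkQL ∘L T).range.exists_le_ker_of_lt_top (lt_top_iff_ne_top.mpr hne)
  have hφT : (LinearMap.toContinuousLinearMap φ ∘L R.mkQL) ∘L T = 0 := by
    ext e
    exact hle ⟨e, rfl⟩
  refine hφ (LinearMap.ext fun y => ?_)
  obtain ⟨x, rfl⟩ := R.mkQ_surjective y
  exact DFunLike.congr_fun (hT _ hφT) x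

theorem hasRightInverse_rangeRestrict [CompleteSpace E] [CompleteSpace F] {f : E →L[𝕜] F}
    (hker : f.ker.ClosedComplemented) (hrange : IsClosed (f.range : Set F)) :
    f.rangeRestrict.HasRightInverse := by
  obtain ⟨M, hM, hcompl⟩ := hker.exists_isClosed_isCompl
  have : CompleteSpace M := hM.completeSpace_coe
  have : CompleteSpace f.range := hrange.completeSpace_coe
  set g : M →L[𝕜] f.range := f.rangeRestrict ∘L M.subtypeL
  have hg_inj : g.ker = ⊥ := by
    refine LinearMap.ker_eq_bot'.mpr fun m hm => ?_
    have hm' : (m : E) ∈ f.ker := congrArg Subtype.val hm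
    simpa using Submodule.disjoint_def.mp hcompl.disjoint _ hm' m.2
  have hg_surj : g.range = ⊤ := by
    refine Submodule.eq_top_iff'.mpr fun ⟨_, x, rfl⟩ => ?_
    obtain ⟨n, hn, m, hm, rfl⟩ :=
      Submodule.mem_sup.mp (hcompl.sup_eq_top ▸ Submodule.mem_top (x := x))
    refine ⟨⟨m, hm⟩, Subtype.ext ?_⟩
    simp [g, show f n = 0 from hn]
  let e := ContinuousLinearEquiv.ofBijective g hg_inj hg_surj
  exact ⟨M.subtypeL ∘L (e.symm : f.range →L[𝕜] M), e.apply_symm_apply⟩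

end ContinuousLinearMap

theorem IsCompactOperator.of_comp_isOpenMap {M₁ M₂ M₃ : Type*} [Zero M₁] [Zero M₂]
    [TopologicalSpace M₁] [TopologicalSpace M₂] [TopologicalSpace M₃] {f : M₁ → M₂} {g : M₂ → M₃}
    (hf : IsOpenMap f) (hf₀ : f 0 = 0) (hgf : IsCompactOperator (g ∘ f)) :
    IsCompactOperator g := by
  obtain ⟨C, hC, hgfC⟩ := hgf
  refine ⟨C, hC, Filter.mem_of_superset (hf₀ ▸ hf.image_mem_nhds hgfC) ?_⟩
  rintro _ ⟨x, hx, rfl⟩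
  exact hx

namespace IsCompactOperator

section NontriviallyNormedField

variable {𝕜 F : Type*} [NontriviallyNormedField 𝕜] [CompleteSpace 𝕜]
  [NormedAddCommGroup F] [NormedSpace 𝕜 F] {K : F →L[𝕜] F}

theorem finiteDimensional_ker_one_add (hK : IsCompactOperator K) :
    FiniteDimensional 𝕜 (1 + K).ker := by
  set N := (1 + K).ker
  have hNK : ∀ x ∈ N, -K x ∈ N := fun x hx => by
    have : x + K x = 0 := hx
    rwa [← eq_neg_of_add_eq_zero_left this]
  have hid : (id : N → N) = Set.codRestrict (fun x : N => -K x) N (fun x => hNK x x.2) := by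
    funext x
    exact Subtype.ext (eq_neg_of_add_eq_zero_left x.2)
  apply FiniteDimensional.of_isCompactOperator_id
  rw [hid]
  exact (hK.neg.comp_clm N.subtypeL).codRestrict _ (ContinuousLinearMap.isClosed_ker _)

theorem finiteDimensional_quotient_of_range_one_add_le (hK : IsCompactOperator K)
    {R : Submodule 𝕜 F} [IsClosed (R : Set F)] (hR : (1 + K).range ≤ R) :
    FiniteDimensional 𝕜 (F ⧸ R) := by
  have hq : (R.mkQ : F → F ⧸ R) = -(R.mkQL ∘ K) := by
    funext x
    have : R.mkQ (x + K x) = 0 := (R.mkQ.mem_ker).mp (by simpa using hR ⟨x, rfl⟩)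
    simpa [eq_neg_iff_add_eq_zero] using this
  apply FiniteDimensional.of_isCompactOperator_id
  refine .of_comp_isOpenMap R.isOpenMap_mkQ (map_zero _) ?_
  rw [Function.id_comp, hq]
  exact (hK.continuous_comp R.mkQL.continuous).neg

end NontriviallyNormedField

variable {𝕜 F : Type*} [RCLike 𝕜] [NormedAddCommGroup F] [NormedSpace 𝕜 F] {K : F →L[𝕜] F}

theorem exists_antilipschitzWith_one_add_comp_subtypeL (hK : IsCompactOperator K)
    {M : Submodule 𝕜 F} (hM : IsClosed (M : Set F)) (hMN : Disjoint M (1 + K).ker) :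
    ∃ c, AntilipschitzWith c ((1 + K) ∘L M.subtypeL) := by
  rw [antilipschitzWith_iff_exists_mul_le_norm]
  by_contra! h
  have hseq (n : ℕ) : ∃ u : M, ‖u‖ = 1 ∧ ‖(1 + K) (u : F)‖ < 1 / (n + 1) := by
    obtain ⟨x, hx⟩ := h (1 / (n + 1)) (by positivity)
    have hx₀ : x ≠ 0 := by rintro rfl; simp at hx
    refine ⟨(‖x‖⁻¹ : 𝕜) • x, norm_smul_inv_norm hx₀, ?_⟩
    have hxpos : 0 < ‖x‖ := norm_pos_iff.mpr hx₀
    calc ‖(1 + K) ((‖x‖⁻¹ : 𝕜) • x : M)‖ = ‖x‖⁻¹ * ‖(1 + K) (x : F)‖ := by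
          simp only [Submodule.coe_smul, map_smul, norm_smul, norm_inv, RCLike.norm_ofReal,
            abs_norm, Submodule.coe_norm]
      _ < ‖x‖⁻¹ * (1 / (n + 1) * ‖x‖) := by gcongr; exact hx
      _ = 1 / (n + 1) := by field_simp
  choose u hu_norm hu_small using hseq
  have hAu : Tendsto (fun n => (1 + K) (u n : F)) atTop (𝓝 0) :=
    squeeze_zero_norm (fun n => (hu_small n).le) tendsto_one_div_add_atTop_nhds_zero_nat
  obtain ⟨C, hC, hKC⟩ := hK.image_closedBall_subset_compact 1
  obtain ⟨y, -, φ, hφ, hy⟩ := hC.tendsto_subseq (x := fun n => K (u n))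
    fun n => hKC ⟨u n, mem_closedBall_zero_iff.mpr (hu_norm n).le, rfl⟩
  have hAuφ := hAu.comp hφ.tendsto_atTop
  -- `u = (1 + K) u - K u`, and both terms converge along `φ`.
  have hlim : Tendsto (fun n => (u (φ n) : F)) atTop (𝓝 (-y)) := by
    simpa [Function.comp_def] using hAuφ.sub hy
  have hyM : -y ∈ M := hM.mem_of_tendsto hlim (Eventually.of_forall fun n => (u (φ n)).2)
  have hyN : -y ∈ (1 + K).ker :=
    tendsto_nhds_unique (((1 + K).continuous.tendsto _).comp hlim) hAuφ
  have hy₁ : ‖-y‖ = 1 :=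
    tendsto_nhds_unique hlim.norm (tendsto_const_nhds.congr fun n => (hu_norm (φ n)).symm)
  rw [Submodule.disjoint_def.mp hMN _ hyM hyN, norm_zero] at hy₁
  exact zero_ne_one hy₁

theorem isClosed_range_one_add [CompleteSpace F] (hK : IsCompactOperator K) :
    IsClosed ((1 + K).range : Set F) := by
  have := hK.finiteDimensional_ker_one_add
  obtain ⟨M, hM, hcompl⟩ :=
    (Submodule.ClosedComplemented.of_finiteDimensional (1 + K).ker).exists_isClosed_isCompl
  obtain ⟨c, hc⟩ := hK.exists_antilipschitzWith_one_add_comp_subtypeL hM hcompl.disjoint.symm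
  have : CompleteSpace M := hM.completeSpace_coe
  have hrange : ((1 + K) ∘L M.subtypeL).range = (1 + K).range := by
    rw [ContinuousLinearMap.toLinearMap_comp, LinearMap.range_comp,
      Submodule.toLinearMap_subtypeL, Submodule.range_subtype, LinearMap.range_eq_map,
      ← hcompl.sup_eq_top, Submodule.map_sup, LinearMap.le_ker_iff_map.mp le_rfl, bot_sup_eq]
  rw [← hrange]
  exact hc.isClosed_range (ContinuousLinearMap.uniformContinuous _)

theorem hasRightInverse_rangeRestrict_one_add [CompleteSpace F] (hK : IsCompactOperator K) :
    (1 + K).rangeRestrict.HasRightInverse :=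
  have := hK.finiteDimensional_ker_one_add
  ContinuousLinearMap.hasRightInverse_rangeRestrict (.of_finiteDimensional _)
    hK.isClosed_range_one_add

end IsCompactOperator

theorem stmt0_general {E F : Type*}
    [NormedAddCommGroup E] [NormedSpace ℝ E]
    [NormedAddCommGroup F] [NormedSpace ℝ F] [CompleteSpace F]
    (T : E →L[ℝ] F)
    (hTadj : ∀ ℓ : F →L[ℝ] ℝ, ℓ.comp T = 0 → ℓ = 0)
    (S' : F →L[ℝ] E) (K : F →L[ℝ] F) (hK : IsCompactOperator K)
    (hTS : T.comp S' = ContinuousLinearMap.id ℝ F + K) :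
    ∃ S : F →L[ℝ] E, T.comp S = ContinuousLinearMap.id ℝ F := by
  set R := (1 + K).range
  have : IsClosed (R : Set F) := hK.isClosed_range_one_add
  have : FiniteDimensional ℝ (F ⧸ R) := hK.finiteDimensional_quotient_of_range_one_add_le le_rfl
  obtain ⟨G, hG⟩ := hK.hasRightInverse_rangeRestrict_one_add
  have hTG : T ∘L S' ∘L G = R.subtypeL := by
    ext r
    exact (DFunLike.congr_fun hTS (G r)).trans (congrArg Subtype.val (hG r))
  obtain ⟨S, hS⟩ := ContinuousLinearMap.HasRightInverse.of_mkQL_comp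
    (.of_surjective_of_finiteDimensional (T.surjective_mkQL_comp_of_forall_comp_eq_zero hTadj R))
    hTG
  exact ⟨S, ContinuousLinearMap.ext hS⟩

/-- Let `E` and `F` be real Banach spaces and `T : E → F` a bounded linear
operator whose adjoint `T* : F* → E*`, `ℓ ↦ ℓ ∘ T`, is injective (`N(T*) = {0}`). If there exist
a bounded linear operator `S̃ : F → E` and a compact linear operator `K : F → F` such that
`T ∘ S̃ = I + K`, then `T` admits a bounded linear right inverse `S : F → E` with `T ∘ S = I`. -/
theorem stmt0 {E F : Type*}
    [NormedAddCommGroup E] [NormedSpace ℝ E] [CompleteSpace E]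
    [NormedAddCommGroup F] [NormedSpace ℝ F] [CompleteSpace F]
    (T : E →L[ℝ] F)
    (hTadj : ∀ ℓ : F →L[ℝ] ℝ, ℓ.comp T = 0 → ℓ = 0)
    (S' : F →L[ℝ] E) (K : F →L[ℝ] F) (hK : IsCompactOperator K)
    (hTS : T.comp S' = ContinuousLinearMap.id ℝ F + K) :
    ∃ S : F →L[ℝ] E, T.comp S = ContinuousLinearMap.id ℝ F :=
  stmt0_general T hTadj S' K hK hTS
end

section
/- Let Ω ⊂ ℝⁿ be an open connected set, let a : Ω → ℝⁿ be continuous, and assume that a is not the gradient of a C¹ function: there exists no differentiable function A : Ω → ℝ with ∇A(x) = a(x) for every x ∈ Ω. If g : Ω → ℝ is differentiable and satisfies ∇g(x) = g(x)·a(x) for every x ∈ Ω, then g ≡ 0 on Ω. -/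
/-!
Along a segment starting at a zero of `g`, the function `t ↦ g (x₀ + t • (x - x₀))` solves a
linear ODE with bounded coefficient, so Grönwall's inequality forces it to vanish. Hence the
zero set of `g` is open in `Ω`; it is also relatively closed, so on the connected set `Ω` either
`g ≡ 0` or `g` never vanishes. In the latter case `Real.log ∘ g` (that is, `log |g|`) would be a
potential of `a`, since `∇(log |g|) = ∇g / g = a`.
-/

open Set Filter Topology Metric InnerProductSpace Convex

section

variable {E : Type*} [NormedAddCommGroup E] [NormedSpace ℝ E] {a : E → StrongDual ℝ E}
  {g : E → ℝ}

theorem eq_zero_of_hasFDerivAt_smul_on_segment {x₀ x : E} {C : ℝ}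
    (hg : ∀ y ∈ [x₀ -[ℝ] x], HasFDerivAt g (g y • a y) y)
    (ha : ∀ y ∈ [x₀ -[ℝ] x], ‖a y‖ ≤ C) (h₀ : g x₀ = 0) : g x = 0 := by
  set γ : ℝ → E := fun t => x₀ + t • (x - x₀)
  have hγ : ∀ t ∈ Icc (0 : ℝ) 1, γ t ∈ [x₀ -[ℝ] x] := fun t ht => by
    rw [segment_eq_image']
    exact mem_image_of_mem _ ht
  have hγ' : ∀ t : ℝ, HasDerivAt γ (x - x₀) t := fun t => by
    simpa only [one_smul] using ((hasDerivAt_id' t).smul_const (x - x₀)).const_add x₀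
  have hderiv : ∀ t ∈ Icc (0 : ℝ) 1,
      HasDerivAt (g ∘ γ) (g (γ t) * a (γ t) (x - x₀)) t := fun t ht =>
    (hg _ (hγ t ht)).comp_hasDerivAt t (hγ' t)
  have hbound : ∀ t ∈ Ico (0 : ℝ) 1,
      ‖g (γ t) * a (γ t) (x - x₀)‖ ≤ (C * ‖x - x₀‖) * ‖(g ∘ γ) t‖ := fun t ht => by
    have hC := ha _ (hγ t (Ico_subset_Icc_self ht))
    calc ‖g (γ t) * a (γ t) (x - x₀)‖ = ‖g (γ t)‖ * ‖a (γ t) (x - x₀)‖ := norm_mul _ _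
      _ ≤ ‖g (γ t)‖ * (C * ‖x - x₀‖) := by
          gcongr
          exact (a (γ t)).le_of_opNorm_le hC _
      _ = (C * ‖x - x₀‖) * ‖(g ∘ γ) t‖ := mul_comm _ _
  have h := eq_zero_of_abs_deriv_le_mul_abs_self_of_eq_zero_right
    (fun t ht => (hderiv t ht).continuousAt.continuousWithinAt)
    (fun t ht => (hderiv t (Ico_subset_Icc_self ht)).hasDerivWithinAt)
    (by simpa [γ] using h₀) hbound 1 (right_mem_Icc.mpr zero_le_one)
  simpa [γ] using h

theorem eventually_eq_zero_of_hasFDerivAt_smul {Ω : Set E} (hΩ : IsOpen Ω)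
    (ha : ContinuousOn a Ω) (hg : ∀ x ∈ Ω, HasFDerivAt g (g x • a x) x) {x₀ : E}
    (hx₀ : x₀ ∈ Ω) (h₀ : g x₀ = 0) : ∀ᶠ x in 𝓝 x₀, g x = 0 := by
  have hbdd : ∀ᶠ x in 𝓝 x₀, ‖a x‖ ≤ ‖a x₀‖ + 1 :=
    (ha.continuousAt (hΩ.mem_nhds hx₀)).norm.eventually (ge_mem_nhds (lt_add_one _))
  obtain ⟨r, hr, hball⟩ := Metric.mem_nhds_iff.mp (inter_mem (hΩ.mem_nhds hx₀) hbdd)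
  filter_upwards [ball_mem_nhds x₀ hr] with x hx
  have hseg := (convex_ball x₀ r).segment_subset (mem_ball_self hr) hx
  exact eq_zero_of_hasFDerivAt_smul_on_segment (fun y hy => hg y (hball (hseg hy)).1)
    (fun y hy => (hball (hseg hy)).2) h₀

theorem HasFDerivAt.log_of_smul {L : StrongDual ℝ E} {x : E} (hg : HasFDerivAt g (g x • L) x)
    (hx : g x ≠ 0) : HasFDerivAt (fun y => Real.log (g y)) L x := by
  simpa [smul_smul, inv_mul_cancel₀ hx] using hg.log hx

end

theorem IsPreconnected.forall_eq_zero_or_forall_ne_zero {X β : Type*} [TopologicalSpace X]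
    [TopologicalSpace β] [T1Space β] [Zero β] {Ω : Set X} {g : X → β}
    (hΩ : IsPreconnected Ω) (hΩo : IsOpen Ω) (hg : ContinuousOn g Ω)
    (hzero : ∀ x ∈ Ω, g x = 0 → ∀ᶠ y in 𝓝 x, g y = 0) :
    (∀ x ∈ Ω, g x = 0) ∨ ∀ x ∈ Ω, g x ≠ 0 := by
  have hopen_zero : IsOpen {x | x ∈ Ω ∧ g x = 0} := isOpen_iff_mem_nhds.mpr fun x ⟨hx, h₀⟩ =>
    (eventually_mem_set.mpr (hΩo.mem_nhds hx)).and (hzero x hx h₀)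
  have hopen_ne : IsOpen (Ω ∩ g ⁻¹' {0}ᶜ) := hg.isOpen_inter_preimage hΩo isOpen_compl_singleton
  have hcover : Ω ⊆ {x | x ∈ Ω ∧ g x = 0} ∪ (Ω ∩ g ⁻¹' {0}ᶜ) := fun x hx =>
    (em (g x = 0)).imp (fun h => ⟨hx, h⟩) (fun h => ⟨hx, h⟩)
  have hdisj : Disjoint {x | x ∈ Ω ∧ g x = 0} (Ω ∩ g ⁻¹' {0}ᶜ) :=
    disjoint_left.mpr fun _ h₀ hne => hne.2 h₀.2
  exact (hΩ.subset_or_subset hopen_zero hopen_ne hdisj hcover).imp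
    (fun h x hx => (h hx).2) (fun h x hx => (h hx).2)

/-- Let `Ω ⊂ ℝⁿ` be an open connected set, `a : Ω → ℝⁿ` continuous, and
assume `a` is not the gradient of a (automatically `C¹`) differentiable function on `Ω`.
If `g : Ω → ℝ` is differentiable with `∇g(x) = g(x) • a(x)` for every `x ∈ Ω`, then `g ≡ 0`
on `Ω`. -/
theorem stmt10 (n : ℕ) (Ω : Set (EuclideanSpace ℝ (Fin n)))
    (hΩopen : IsOpen Ω) (hΩconn : IsConnected Ω)
    (a : EuclideanSpace ℝ (Fin n) → EuclideanSpace ℝ (Fin n)) (ha : ContinuousOn a Ω)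
    (hnotgrad : ¬ ∃ A : EuclideanSpace ℝ (Fin n) → ℝ, ∀ x ∈ Ω, HasGradientAt A (a x) x)
    (g : EuclideanSpace ℝ (Fin n) → ℝ)
    (hg : ∀ x ∈ Ω, HasGradientAt g (g x • a x) x) :
    ∀ x ∈ Ω, g x = 0 := by
  set a' := fun x => toDual ℝ (EuclideanSpace ℝ (Fin n)) (a x)
  have ha' : ContinuousOn a' Ω := (toDual ℝ _).continuous.comp_continuousOn ha
  have hg' : ∀ x ∈ Ω, HasFDerivAt g (g x • a' x) x := fun x hx => by
    simpa [a', map_smul] using (hg x hx).hasFDerivAt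
  refine (hΩconn.isPreconnected.forall_eq_zero_or_forall_ne_zero hΩopen
    (fun x hx => (hg' x hx).continuousAt.continuousWithinAt)
    (fun x hx h₀ => eventually_eq_zero_of_hasFDerivAt_smul hΩopen ha' hg' hx h₀)).resolve_right ?_
  intro hne
  refine hnotgrad ⟨fun x => Real.log (g x), fun x hx => ?_⟩
  simpa [a'] using ((hg' x hx).log_of_smul (hne x hx)).hasGradientAt
end
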